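/- Let ⊢ be a logic and x∗y a binary term in which both variables occur. Then ∗ is an r-partition function for ⊢ if and only if ∗ is an r-partition function for the containment companion ⊢^r. -/

import Mathlib

open FirstOrder FirstOrder.Language

variable {L : FirstOrder.Language.{0, 0}}

/-- The set of variables occurring in a formula (term). -/
def Tvar (φ : L.Term ℕ) : Set ℕ := {x | x ∈ φ.varFinset}

/-- The set of variables occurring in a set of formulas. -/
def SVar (Γ : Set (L.Term ℕ)) : Set ℕ := ⋃ γ ∈ Γ, Tvar γ

/-- The image of a set of formulas under a substitution. -/
def SubstImg (σ : ℕ → L.Term ℕ) (Γ : Set (L.Term ℕ)) : Set (L.Term ℕ) :=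
  (fun ψ => ψ.subst σ) '' Γ

/-- A logic: a substitution-invariant consequence relation on formulas. -/
structure ConsLogic (L : FirstOrder.Language.{0, 0}) where
  deriv : Set (L.Term ℕ) → L.Term ℕ → Prop
  refl : ∀ Γ φ, φ ∈ Γ → deriv Γ φ
  mono : ∀ Γ Δ φ, Γ ⊆ Δ → deriv Γ φ → deriv Δ φ
  cut : ∀ Γ Δ φ, (∀ δ ∈ Δ, deriv Γ δ) → deriv (Γ ∪ Δ) φ → deriv Γ φ
  substInv : ∀ Γ φ (σ : ℕ → L.Term ℕ), deriv Γ φ → deriv (SubstImg σ Γ) (φ.subst σ)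

/-- A consequence relation is finitary. -/
def FinitaryRel (R : Set (L.Term ℕ) → L.Term ℕ → Prop) : Prop :=
  ∀ Γ φ, R Γ φ → ∃ Δ : Finset (L.Term ℕ), ↑Δ ⊆ Γ ∧ R ↑Δ φ

/-- Σ is an antitheorem of the consequence relation `R`. -/
def IsAntitheorem (R : Set (L.Term ℕ) → L.Term ℕ → Prop) (S : Set (L.Term ℕ)) : Prop :=
  ∀ (σ : ℕ → L.Term ℕ) (φ : L.Term ℕ), R (SubstImg σ S) φ

/-- The containment companion of a logic. -/
def CC (V : ConsLogic L) (Γ : Set (L.Term ℕ)) (φ : L.Term ℕ) : Prop :=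
  (V.deriv Γ φ ∧ Tvar φ ⊆ SVar Γ) ∨ ∃ S, IsAntitheorem V.deriv S ∧ S ⊆ Γ

/-- The matrix ⟨A, F⟩ is a model of the consequence relation `R`. -/
def IsMatrixModel (R : Set (L.Term ℕ) → L.Term ℕ → Prop) (A : Type) [L.Structure A]
    (F : Set A) : Prop :=
  ∀ Γ φ, R Γ φ → ∀ h : ℕ → A, (∀ γ ∈ Γ, Term.realize h γ ∈ F) → Term.realize h φ ∈ F

/-- An isomorphism of matrices: an isomorphism of the underlying algebras mapping the
filter exactly onto the filter. -/
def MatrixIso (A : Type) [L.Structure A] (F : Set A) (B : Type) [L.Structure B]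
    (G : Set B) : Prop :=
  ∃ e : L.Equiv A B, ∀ a, a ∈ F ↔ e a ∈ G

/-- The one-element structure. -/
def punitStruct : L.Structure PUnit where
  funMap _ _ := PUnit.unit
  RelMap _ _ := False

/-- An r-direct system of matrices over the join-semilattice `I`. -/
structure RDirectSystem (L : FirstOrder.Language.{0, 0}) (I : Type) [SemilatticeSup I] where
  A : I → Type
  str : ∀ i, L.Structure (A i)
  F : ∀ i, Set (A i)
  f : ∀ i j, i ≤ j → A i → A j
  f_hom : ∀ i j (h : i ≤ j) (n : ℕ) (g : L.Functions n) (as : Fin n → A i),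
    f i j h (@Structure.funMap L (A i) (str i) n g as) =
      @Structure.funMap L (A j) (str j) n g (fun k => f i j h (as k))
  f_id : ∀ i (a : A i), f i i le_rfl a = a
  f_comp : ∀ i j k (hij : i ≤ j) (hjk : j ≤ k) (a : A i),
    f j k hjk (f i j hij a) = f i k (hij.trans hjk) a
  plus_sup : ∀ i j, (F i).Nonempty → (F j).Nonempty → (F (i ⊔ j)).Nonempty
  f_filter : ∀ i j (h : i ≤ j), (F j).Nonempty → f i j h ⁻¹' F j = F i

/-- The Płonka sum structure over an r-direct system (the language has no constants). -/
def RDirectSystem.plonkaStr {I : Type} [SemilatticeSup I] (S : RDirectSystem L I)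
    [IsEmpty (L.Functions 0)] : L.Structure (Σ i, S.A i) where
  funMap {n} g as :=
    match n, g, as with
    | 0, g, _ => isEmptyElim g
    | (m + 1), g, as =>
      ⟨Finset.univ.sup' Finset.univ_nonempty fun k => (as k).1,
        @Structure.funMap L _ (S.str _) _ g fun k =>
          S.f (as k).1 _ (Finset.le_sup' (fun k => (as k).1) (Finset.mem_univ k)) (as k).2⟩
  RelMap _ _ := False

/-- The filter of the Płonka sum of an r-direct system of matrices. -/
def RDirectSystem.filter {I : Type} [SemilatticeSup I] (S : RDirectSystem L I) :
    Set (Σ i, S.A i) := {a | a.2 ∈ S.F a.1}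


/-- The application `t ∗ u` of the binary term `s` to formulas `t` and `u`. -/
def starT (s : L.Term (Fin 2)) (t u : L.Term ℕ) : L.Term ℕ := s.subst ![t, u]

/-- The result `χ(t, z̄)` of substituting the formula `t` for the variable `v` in `χ`. -/
def substVar (χ : L.Term ℕ) (v : ℕ) (t : L.Term ℕ) : L.Term ℕ :=
  χ.subst (fun m => if m = v then t else Term.var m)

/-- `(ε, δ)` is an instance of one of the partition-function identities P1–P5,
read as term identities for `∗`. -/
def IsPIdentInstance (s : L.Term (Fin 2)) (ε δ : L.Term ℕ) : Prop :=
  (∃ a, ε = starT s a a ∧ δ = a) ∨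
  (∃ a b c, ε = starT s a (starT s b c) ∧ δ = starT s (starT s a b) c) ∨
  (∃ a b c, ε = starT s a (starT s b c) ∧ δ = starT s a (starT s c b)) ∨
  (∃ (n : ℕ) (g : L.Functions (n + 1)) (as : Fin (n + 1) → L.Term ℕ) (b : L.Term ℕ),
    ε = starT s (Term.func g as) b ∧ δ = Term.func g (fun k => starT s (as k) b)) ∨
  (∃ (n : ℕ) (g : L.Functions (n + 1)) (as : Fin (n + 1) → L.Term ℕ) (b : L.Term ℕ),
    ε = starT s b (Term.func g as) ∧ δ = (List.ofFn as).foldl (starT s) b)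

/-- The consequence relation `R` has `s` as an r-partition function. -/
def HasRPartitionFunction (R : Set (L.Term ℕ) → L.Term ℕ → Prop) (s : L.Term (Fin 2)) :
    Prop :=
  (∀ i : Fin 2, i ∈ s.varFinset) ∧
  R {Term.var 0, Term.var 1} (starT s (Term.var 0) (Term.var 1)) ∧
  R {starT s (Term.var 0) (Term.var 1)} (Term.var 0) ∧
  ∀ ε δ, IsPIdentInstance s ε δ → ∀ (χ : L.Term ℕ) (v : ℕ),
    R {substVar χ v ε} (substVar χ v δ) ∧ R {substVar χ v δ} (substVar χ v ε)

/-- The interpretation of the binary term `s` in the structure `A`. -/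
def dotOf (A : Type) [L.Structure A] (s : L.Term (Fin 2)) : A → A → A :=
  fun a b => Term.realize ![a, b] s

/-- A binary operation on an `L`-structure is a partition function. -/
def IsPartitionFunction (A : Type) [L.Structure A] (d : A → A → A) : Prop :=
  (∀ a, d a a = a) ∧
  (∀ a b c, d a (d b c) = d (d a b) c) ∧
  (∀ a b c, d a (d b c) = d a (d c b)) ∧
  (∀ (n : ℕ) (g : L.Functions (n + 1)) (as : Fin (n + 1) → A) (b : A),
    d (Structure.funMap g as) b = Structure.funMap g (fun k => d (as k) b)) ∧
  (∀ (n : ℕ) (g : L.Functions (n + 1)) (as : Fin (n + 1) → A) (b : A),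
    d b (Structure.funMap g as) = (List.ofFn as).foldl d b)

/-- The equivalence relation `a ≈ b` induced by a partition function. -/
def PApprox {A : Type} (d : A → A → A) (a b : A) : Prop := d a b = a ∧ d b a = b

/-! Every rule required of an r-partition function has all variables of its conclusion among
those of its premises: for `x ∗ y` this is where both variables must occur in the term, and each
of P1–P5 has the same variables on both sides, so it stays so inside any context `χ`. Hence such a
rule holds in `⊢` iff it holds in `⊢^r`, because `⊢^r` is contained in `⊢` (an antitheorem
derives every formula from itself) and contains every variable-containing rule of `⊢`. -/

namespace FirstOrder.Language.Term

theorem subst_var {α : Type*} (t : L.Term α) : t.subst var = t := by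
  induction t with
  | var a => rfl
  | func f ts ih => exact congrArg (func f) (funext ih)

theorem mem_varFinset_subst {α β : Type*} [DecidableEq α] [DecidableEq β]
    (t : L.Term α) (σ : α → L.Term β) (x : β) :
    x ∈ (t.subst σ).varFinset ↔ ∃ m ∈ t.varFinset, x ∈ (σ m).varFinset := by
  induction t with
  | var a => simp [varFinset]
  | func f ts ih =>
    simp only [subst, varFinset, Finset.mem_biUnion, Finset.mem_univ, true_and, ih]
    tauto

end FirstOrder.Language.Term

section Variables

theorem Tvar_func {n : ℕ} (g : L.Functions n) (as : Fin n → L.Term ℕ) :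
    Tvar (Term.func g as) = ⋃ k, Tvar (as k) := by
  ext x
  simp [Tvar, Term.varFinset]

theorem SVar_singleton (φ : L.Term ℕ) : SVar ({φ} : Set (L.Term ℕ)) = Tvar φ := by
  simp [SVar]

theorem SVar_pair (φ ψ : L.Term ℕ) : SVar ({φ, ψ} : Set (L.Term ℕ)) = Tvar φ ∪ Tvar ψ := by
  simp [SVar]

variable {s : L.Term (Fin 2)}

theorem Tvar_starT (hs : ∀ i : Fin 2, i ∈ s.varFinset) (t u : L.Term ℕ) :
    Tvar (starT s t u) = Tvar t ∪ Tvar u := by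
  ext x
  simp only [Tvar, starT, Set.mem_ofPred_eq, Term.mem_varFinset_subst, Set.mem_union]
  constructor
  · rintro ⟨m, -, hx⟩
    fin_cases m
    · exact .inl (by simpa using hx)
    · exact .inr (by simpa using hx)
  · rintro (hx | hx)
    · exact ⟨0, hs 0, by simpa using hx⟩
    · exact ⟨1, hs 1, by simpa using hx⟩

theorem Tvar_foldl_starT (hs : ∀ i : Fin 2, i ∈ s.varFinset) (l : List (L.Term ℕ))
    (b : L.Term ℕ) : Tvar (l.foldl (starT s) b) = Tvar b ∪ ⋃ t ∈ l, Tvar t := by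
  induction l generalizing b with
  | nil => simp
  | cons a l ih =>
    simp only [List.foldl_cons, ih, Tvar_starT hs, List.mem_cons, Set.iUnion_or,
      Set.iUnion_union_distrib, Set.iUnion_iUnion_eq_left, Set.union_assoc]

theorem IsPIdentInstance.Tvar_eq (hs : ∀ i : Fin 2, i ∈ s.varFinset) {ε δ : L.Term ℕ}
    (h : IsPIdentInstance s ε δ) : Tvar ε = Tvar δ := by
  rcases h with ⟨a, rfl, rfl⟩ | ⟨a, b, c, rfl, rfl⟩ | ⟨a, b, c, rfl, rfl⟩ |
    ⟨n, g, as, b, rfl, rfl⟩ | ⟨n, g, as, b, rfl, rfl⟩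
  · rw [Tvar_starT hs, Set.union_self]
  · simp only [Tvar_starT hs, Set.union_assoc]
  · simp only [Tvar_starT hs, Set.union_comm (Tvar b)]
  · simp only [Tvar_starT hs, Tvar_func, Set.iUnion_union]
  · simp only [Tvar_starT hs, Tvar_func, Tvar_foldl_starT hs, List.mem_ofFn,
      Set.iUnion_exists, Set.iUnion_iUnion_eq']

theorem Tvar_substVar_congr {ε δ : L.Term ℕ} (h : Tvar ε = Tvar δ) (χ : L.Term ℕ) (v : ℕ) :
    Tvar (substVar χ v ε) = Tvar (substVar χ v δ) := by
  ext x
  simp only [Tvar, substVar, Set.mem_ofPred_eq, Term.mem_varFinset_subst]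
  refine exists_congr fun m => and_congr_right fun _ => ?_
  split_ifs
  · exact Set.ext_iff.mp h x
  · rfl

end Variables

theorem SubstImg_var (Γ : Set (L.Term ℕ)) : SubstImg Term.var Γ = Γ := by
  simp [SubstImg, Term.subst_var]

theorem IsAntitheorem.self_deriv {R : Set (L.Term ℕ) → L.Term ℕ → Prop} {S : Set (L.Term ℕ)}
    (hS : IsAntitheorem R S) (φ : L.Term ℕ) : R S φ := by
  simpa only [SubstImg_var] using hS Term.var φ

theorem ConsLogic.deriv_of_CC (V : ConsLogic L) {Γ : Set (L.Term ℕ)} {φ : L.Term ℕ}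
    (h : CC V Γ φ) : V.deriv Γ φ := by
  rcases h with ⟨h, -⟩ | ⟨S, hS, hSΓ⟩
  · exact h
  · exact V.mono S Γ φ hSΓ (hS.self_deriv φ)

theorem HasRPartitionFunction.of_var_subset {R R' : Set (L.Term ℕ) → L.Term ℕ → Prop}
    {s : L.Term (Fin 2)} (hRR' : ∀ Γ φ, R Γ φ → Tvar φ ⊆ SVar Γ → R' Γ φ)
    (h : HasRPartitionFunction R s) : HasRPartitionFunction R' s := by
  obtain ⟨hs, hjoin, hproj, hident⟩ := h
  refine ⟨hs, hRR' _ _ hjoin ?_, hRR' _ _ hproj ?_, fun ε δ hεδ χ v => ?_⟩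
  · rw [SVar_pair, Tvar_starT hs]
  · rw [SVar_singleton, Tvar_starT hs]
    exact Set.subset_union_left
  · have hvar := Tvar_substVar_congr (hεδ.Tvar_eq hs) χ v
    exact ⟨hRR' _ _ (hident ε δ hεδ χ v).1 (by rw [SVar_singleton, hvar]),
      hRR' _ _ (hident ε δ hεδ χ v).2 (by rw [SVar_singleton, hvar])⟩

theorem statement_13_general (L : FirstOrder.Language.{0, 0})
    (V : ConsLogic L) (s : L.Term (Fin 2)) :
    HasRPartitionFunction V.deriv s ↔ HasRPartitionFunction (CC V) s :=
  ⟨.of_var_subset fun _ _ h hvar => .inl ⟨h, hvar⟩,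
    .of_var_subset fun _ _ h _ => V.deriv_of_CC h⟩

/-- A binary term `x∗y` in which both variables occur is an
r-partition function for `⊢` if and only if it is an r-partition function for the
containment companion `⊢^r`. -/
theorem statement_13 (L : FirstOrder.Language.{0, 0}) [IsEmpty (L.Functions 0)]
    (V : ConsLogic L) (s : L.Term (Fin 2)) (hocc : ∀ i : Fin 2, i ∈ s.varFinset) :
    HasRPartitionFunction V.deriv s ↔ HasRPartitionFunction (CC V) s :=
  statement_13_general L V s
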